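/- arXiv:2204.06492 — 2 statements merged into one kernel-verified Lean document; each statement's English description precedes it below -/
import Mathlib

section
/- Let S1, S2 be semigroups generated by disjoint finite sets A1, A2 with surjective homomorphisms π_i : A_i^+ → S_i, and let R1 ⊆ A1^+, R2 ⊆ A2^+ be regular combings (i.e. π_i restricted to R_i is surjective onto S_i). Then the language Alt^+(R1, R2) of nonempty alternating words is a regular combing of the semigroup free product S1 ∗ S2, i.e. the canonical map (A1 ∪ A2)^+ → S1 ∗ S2 is surjective when restricted to Alt^+(R1, R2). -/
/-!
Regularity: `Alt⁺(R1, R2)` is obtained from the images of `R1` and `R2` in `(A1 ⊕ A2)*` by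
products, Kleene stars, unions and removal of the empty word, and each of these operations
preserves regularity; we check this with the Myhill–Nerode criterion (finitely many left
quotients).

Combing: in any Kleene algebra, `Alt(P, Q) = (1 + P) * ((QP)∗ + (QP)∗Q)`, so an alternating
word is an optional `P`-block followed by an alternating word that does not start with `P`.
Prepending a letter of `A1` to it merges the letter into that first block, which is then
replaced by an equivalent word of `R1` (symmetrically for `A2`); induction on the length of
`w` gives an alternating word equivalent to `w`.
-/

open Computability

/-- One-step rewriting relation of a rewriting system `R ⊆ A* × A*`. -/
def RStep {A : Type*} (R : Set (List A × List A)) (x y : List A) : Prop :=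
  ∃ p ∈ R, ∃ l r : List A, x = l ++ p.1 ++ r ∧ y = l ++ p.2 ++ r

/-- The congruence generated by a rewriting system: word equality in the
presented semigroup/monoid. -/
def RCong {A : Type*} (R : Set (List A × List A)) : List A → List A → Prop :=
  Relation.EqvGen (RStep R)

/-- The language `Alt(R1, R2)` of alternating words. -/
def Alt {A : Type*} (R1 R2 : Language A) : Language A :=
  (R1 * R2)∗ + (R2 * R1)∗ + (R1 * R2)∗ * R1 + (R2 * R1)∗ * R2

/-- A language over `A1` viewed over the disjoint union alphabet `A1 ⊕ A2`. -/
def lang1 {A1 A2 : Type*} (L : Language A1) : Language (A1 ⊕ A2) :=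
  {w | ∃ x ∈ L, w = x.map Sum.inl}

/-- A language over `A2` viewed over the disjoint union alphabet `A1 ⊕ A2`. -/
def lang2 {A1 A2 : Type*} (L : Language A2) : Language (A1 ⊕ A2) :=
  {w | ∃ x ∈ L, w = x.map Sum.inr}

/-- Relations over `A1` lifted to the disjoint union alphabet `A1 ⊕ A2`. -/
def liftL {A1 A2 : Type*} (R : Set (List A1 × List A1)) :
    Set (List (A1 ⊕ A2) × List (A1 ⊕ A2)) :=
  {p | ∃ q ∈ R, p.1 = q.1.map Sum.inl ∧ p.2 = q.2.map Sum.inl}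

/-- Relations over `A2` lifted to the disjoint union alphabet `A1 ⊕ A2`. -/
def liftR {A1 A2 : Type*} (R : Set (List A2 × List A2)) :
    Set (List (A1 ⊕ A2) × List (A1 ⊕ A2)) :=
  {p | ∃ q ∈ R, p.1 = q.1.map Sum.inr ∧ p.2 = q.2.map Sum.inr}

open Function

section Rewriting

variable {α β : Type*}

theorem Relation.EqvGen.map {r : α → α → Prop} {s : β → β → Prop} (f : α → β)
    (h : ∀ x y, r x y → s (f x) (f y)) {x y : α} (hxy : Relation.EqvGen r x y) :
    Relation.EqvGen s (f x) (f y) := by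
  induction hxy with
  | rel x y hxy => exact .rel _ _ (h x y hxy)
  | refl x => exact .refl _
  | symm x y _ ih => exact .symm _ _ ih
  | trans x y z _ _ ih₁ ih₂ => exact .trans _ _ _ ih₁ ih₂

variable {R : Set (List α × List α)}

theorem RStep.append_left {x y : List α} (h : RStep R x y) (l : List α) :
    RStep R (l ++ x) (l ++ y) := by
  obtain ⟨p, hp, u, v, rfl, rfl⟩ := h
  exact ⟨p, hp, l ++ u, v, by simp, by simp⟩

theorem RStep.append_right {x y : List α} (h : RStep R x y) (r : List α) :
    RStep R (x ++ r) (y ++ r) := by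
  obtain ⟨p, hp, u, v, rfl, rfl⟩ := h
  exact ⟨p, hp, u, v ++ r, by simp, by simp⟩

theorem RStep.map {S : Set (List β × List β)} {f : α → β}
    (hRS : ∀ p ∈ R, (p.1.map f, p.2.map f) ∈ S) {x y : List α} (h : RStep R x y) :
    RStep S (x.map f) (y.map f) := by
  obtain ⟨p, hp, u, v, rfl, rfl⟩ := h
  exact ⟨_, hRS p hp, u.map f, v.map f, by simp, by simp⟩

theorem RCong.append {x y u v : List α} (h₁ : RCong R x y) (h₂ : RCong R u v) :
    RCong R (x ++ u) (y ++ v) :=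
  .trans _ _ _ (Relation.EqvGen.map (· ++ u) (fun _ _ h => h.append_right u) h₁)
    (Relation.EqvGen.map (y ++ ·) (fun _ _ h => h.append_left y) h₂)

theorem RCong.map {S : Set (List β × List β)} {f : α → β}
    (hRS : ∀ p ∈ R, (p.1.map f, p.2.map f) ∈ S) {x y : List α} (h : RCong R x y) :
    RCong S (x.map f) (y.map f) :=
  Relation.EqvGen.map (List.map f) (fun _ _ h => h.map hRS) h

end Rewriting

section KleeneAlgebra

variable {α : Type*} [KleeneAlgebra α]

theorem mul_kstar_mul_comm (a b : α) : a * (b * a)∗ = (a * b)∗ * a := by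
  apply le_antisymm
  · refine mul_kstar_le (le_mul_of_one_le_left' one_le_kstar) ?_
    calc (a * b)∗ * a * (b * a) = (a * b)∗ * (a * b) * a := by simp only [mul_assoc]
      _ ≤ (a * b)∗ * a := mul_le_mul_left kstar_mul_le_kstar a
  · refine kstar_mul_le (le_mul_of_one_le_right' one_le_kstar) ?_
    calc a * b * (a * (b * a)∗) = a * ((b * a) * (b * a)∗) := by simp only [mul_assoc]
      _ ≤ a * (b * a)∗ := mul_le_mul_right mul_kstar_le_kstar a

theorem kstar_add_kstar_mul_eq_one_add_mul (a b : α) :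
    (a * b)∗ + (a * b)∗ * a = 1 + a * ((b * a)∗ + (b * a)∗ * b) := by
  calc (a * b)∗ + (a * b)∗ * a = 1 + (a * b)∗ * (a * b) + (a * b)∗ * a := by
        rw [one_add_kstar_mul]
    _ = 1 + (a * (b * a)∗ + a * (b * a)∗ * b) := by
        rw [mul_kstar_mul_comm]; simp only [mul_assoc]; abel
    _ = 1 + a * ((b * a)∗ + (b * a)∗ * b) := by rw [mul_add, mul_assoc]

end KleeneAlgebra

namespace Language

variable {α β : Type*}

theorem mem_map_iff {f : α → β} {L : Language α} {w : List β} :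
    w ∈ L.map f ↔ ∃ u ∈ L, u.map f = w := Iff.rfl

theorem append_mem_kstar {L : Language α} {x y : List α} (hx : x ∈ L∗) (hy : y ∈ L∗) :
    x ++ y ∈ L∗ :=
  kstar_mul_kstar L ▸ append_mem_mul hx hy

theorem mem_kstar_of_mem {L : Language α} {x : List α} (hx : x ∈ L) : x ∈ L∗ :=
  (le_kstar : L ≤ L∗) hx

theorem leftQuotient_mul (L M : Language α) (x : List α) :
    (L * M).leftQuotient x =
      L.leftQuotient x * M + ⨆ z ∈ {z | ∃ y ∈ L, y ++ z = x}, M.leftQuotient z := by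
  ext w
  simp only [mem_leftQuotient, mem_add, mem_mul, mem_iSup]
  constructor
  · rintro ⟨y, hy, z, hz, h⟩
    rcases List.append_eq_append_iff.1 h with ⟨u, rfl, rfl⟩ | ⟨u, rfl, rfl⟩
    · exact Or.inr ⟨u, ⟨y, hy, rfl⟩, hz⟩
    · exact Or.inl ⟨u, hy, z, hz, rfl⟩
  · rintro (⟨u, hu, z, hz, rfl⟩ | ⟨z, ⟨y, hy, rfl⟩, hz⟩)
    · exact ⟨x ++ u, hu, z, hz, by simp⟩
    · exact ⟨y, hy, z ++ w, hz, by simp⟩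

-- `z` is the part of `x` lying in the last factor of `x ++ w` that starts inside `x`.
theorem leftQuotient_kstar {L : Language α} {x : List α} (hx : x ≠ []) :
    L∗.leftQuotient x =
      ⨆ z ∈ {z | z ≠ [] ∧ ∃ y ∈ L∗, y ++ z = x}, L.leftQuotient z * L∗ := by
  ext w
  simp only [mem_leftQuotient, mem_mul, mem_iSup]
  constructor
  · intro h
    obtain ⟨S, hS, hSL⟩ := mem_kstar_iff_exists_nonempty.1 h
    clear h
    induction S generalizing x with
    | nil => simp_all
    | cons s S ih =>
      have hs : s ∈ L := (hSL s (by simp)).1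
      have hSL' : ∀ y ∈ S, y ∈ L ∧ y ≠ [] := fun y hy => hSL y (by simp [hy])
      have hrest : S.flatten ∈ L∗ := join_mem_kstar fun y hy => (hSL' y hy).1
      rw [List.flatten_cons] at hS
      rcases List.append_eq_append_iff.1 hS with ⟨u, rfl, rfl⟩ | ⟨u, rfl, hu⟩
      · exact ⟨x, ⟨hx, [], nil_mem_kstar L, rfl⟩, u, hs, _, hrest, rfl⟩
      · rcases eq_or_ne u [] with rfl | hu'
        · refine ⟨s, ⟨by simpa using hx, [], nil_mem_kstar L, by simp⟩, [], by simpa, w, ?_, rfl⟩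
          simpa [hu] using hrest
        · obtain ⟨z, ⟨hz, y, hy, rfl⟩, hw⟩ := ih hu' hu.symm hSL'
          exact ⟨z, ⟨hz, s ++ y, append_mem_kstar (mem_kstar_of_mem hs) hy, by simp⟩, hw⟩
  · rintro ⟨z, ⟨hz, y, hy, rfl⟩, u, hu, v, hv, rfl⟩
    simpa using append_mem_kstar hy (append_mem_kstar (mem_kstar_of_mem hu) hv)

theorem leftQuotient_map_map {f : α → β} (hf : Injective f) (L : Language α) (x : List α) :
    (L.map f).leftQuotient (x.map f) = (L.leftQuotient x).map f := by
  ext w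
  simp only [mem_leftQuotient, mem_map_iff, List.map_eq_append_iff]
  constructor
  · rintro ⟨_, hu, x', w', rfl, hx', rfl⟩
    obtain rfl := List.map_injective_iff.2 hf hx'
    exact ⟨w', hu, rfl⟩
  · rintro ⟨w', hw', rfl⟩
    exact ⟨x ++ w', hw', x, w', rfl, rfl, rfl⟩

theorem leftQuotient_map_of_notMem_range {f : α → β} (L : Language α) {x : List β}
    (hx : x ∉ Set.range (List.map f)) : (L.map f).leftQuotient x = 0 := by
  ext w
  simp only [mem_leftQuotient, mem_map_iff, List.map_eq_append_iff]
  refine ⟨?_, fun h => (Set.notMem_empty w h).elim⟩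
  rintro ⟨_, -, x', -, -, hx', -⟩
  exact (hx ⟨x', hx'⟩).elim

theorem isRegular_one : (1 : Language α).IsRegular := by
  refine .of_finite_range_leftQuotient ((Set.toFinite {1, 0}).subset ?_)
  rintro _ ⟨_ | ⟨a, x⟩, rfl⟩
  · simp
  · right
    ext w
    simp [mem_one]

theorem IsRegular.sdiff {L M : Language α} (hL : L.IsRegular) (hM : M.IsRegular) :
    (L \ M).IsRegular := by
  rw [sdiff_eq]
  exact hL.inf hM.compl

theorem IsRegular.mul {L M : Language α} (hL : L.IsRegular) (hM : M.IsRegular) :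
    (L * M).IsRegular := by
  have hfin : (Set.range L.leftQuotient ×ˢ {S | S ⊆ Set.range M.leftQuotient}).Finite :=
    hL.finite_range_leftQuotient.prod hM.finite_range_leftQuotient.finite_subsets
  refine .of_finite_range_leftQuotient
    ((hfin.image fun p => p.1 * M + ⨆ K ∈ p.2, K).subset ?_)
  rintro _ ⟨x, rfl⟩
  refine ⟨(L.leftQuotient x, M.leftQuotient '' {z | ∃ y ∈ L, y ++ z = x}),
    ⟨⟨x, rfl⟩, Set.image_subset_range _ _⟩, ?_⟩
  simp only [leftQuotient_mul, iSup_image]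

theorem IsRegular.kstar {L : Language α} (hL : L.IsRegular) : L∗.IsRegular := by
  have hfin : {S | S ⊆ Set.range L.leftQuotient}.Finite :=
    hL.finite_range_leftQuotient.finite_subsets
  refine .of_finite_range_leftQuotient
    (((hfin.image fun S => ⨆ K ∈ S, K * L∗).insert L∗).subset ?_)
  rintro _ ⟨x, rfl⟩
  rcases eq_or_ne x [] with rfl | hx
  · exact Set.mem_insert _ _
  refine Set.mem_insert_of_mem _
    ⟨L.leftQuotient '' {z | z ≠ [] ∧ ∃ y ∈ L∗, y ++ z = x}, Set.image_subset_range _ _, ?_⟩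
  simp only [leftQuotient_kstar hx, iSup_image]

theorem IsRegular.map_of_injective {f : α → β} (hf : Injective f) {L : Language α}
    (hL : L.IsRegular) : (L.map f).IsRegular := by
  refine .of_finite_range_leftQuotient
    (((hL.finite_range_leftQuotient.image (map f)).insert 0).subset ?_)
  rintro _ ⟨x, rfl⟩
  by_cases hx : x ∈ Set.range (List.map f)
  · obtain ⟨x, rfl⟩ := hx
    exact Set.mem_insert_of_mem _ ⟨_, ⟨x, rfl⟩, (leftQuotient_map_map hf L x).symm⟩
  · exact leftQuotient_map_of_notMem_range L hx ▸ Set.mem_insert _ _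

end Language

section Alternating

variable {α β : Type*}

theorem alt_comm (P Q : Language α) : Alt P Q = Alt Q P := by
  unfold Alt
  abel

theorem alt_eq_one_add_mul (P Q : Language α) :
    Alt P Q = (1 + P) * ((Q * P)∗ + (Q * P)∗ * Q) := by
  have hc : 1 ≤ (Q * P)∗ + (Q * P)∗ * Q := le_add_right one_le_kstar
  calc Alt P Q = ((P * Q)∗ + (P * Q)∗ * P) + ((Q * P)∗ + (Q * P)∗ * Q) := by
        unfold Alt; abel
    _ = P * ((Q * P)∗ + (Q * P)∗ * Q) + (1 + ((Q * P)∗ + (Q * P)∗ * Q)) := by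
        rw [kstar_add_kstar_mul_eq_one_add_mul]; abel
    _ = (1 + P) * ((Q * P)∗ + (Q * P)∗ * Q) := by
        rw [add_eq_right_iff_le.2 hc, one_add_mul, add_comm]

theorem nil_mem_alt (P Q : Language α) : [] ∈ Alt P Q :=
  Or.inl (Or.inl (Or.inl (Language.nil_mem_kstar _)))

theorem Language.IsRegular.alt {P Q : Language α} (hP : P.IsRegular) (hQ : Q.IsRegular) :
    (Alt P Q).IsRegular :=
  (((hP.mul hQ).kstar.add (hQ.mul hP).kstar).add ((hP.mul hQ).kstar.mul hP)).add
    ((hQ.mul hP).kstar.mul hQ)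

/-- The factor `1 + R.map f` is the (possibly empty) first block: the new letter is absorbed
into it, and the enlarged block is replaced by an equivalent word of `R`. -/
theorem exists_rcong_cons_mem_one_add_map_mul {ρ : Set (List α × List α)}
    {σ : Set (List β × List β)} {f : β → α} (hσρ : ∀ p ∈ σ, (p.1.map f, p.2.map f) ∈ ρ)
    {R : Language β} (hR : ∀ w ∈ R, w ≠ []) (hcomb : ∀ w, w ≠ [] → ∃ r ∈ R, RCong σ r w)
    {M : Language α} (b : β) {v : List α} (hv : v ∈ (1 + R.map f) * M) :
    ∃ v' ∈ (1 + R.map f) * M, v' ≠ [] ∧ RCong ρ v' (f b :: v) := by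
  obtain ⟨x, hx, t, ht, rfl⟩ := Language.mem_mul.1 hv
  obtain ⟨y, rfl⟩ : ∃ y : List β, y.map f = x := by
    rcases hx with rfl | ⟨y, -, rfl⟩
    exacts [⟨[], rfl⟩, ⟨y, rfl⟩]
  obtain ⟨r, hr, hry⟩ := hcomb (b :: y) (List.cons_ne_nil b y)
  refine ⟨r.map f ++ t, Language.append_mem_mul (Or.inr ⟨r, hr, rfl⟩) ht, by simp [hR r hr], ?_⟩
  simpa using (hry.map hσρ).append (.refl t)

end Alternating

section FreeProduct

variable {A1 A2 : Type*} {rel1 : Set (List A1 × List A1)} {rel2 : Set (List A2 × List A2)}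
  {R1 : Language A1} {R2 : Language A2}

theorem lang1_eq_map (L : Language A1) : (lang1 L : Language (A1 ⊕ A2)) = L.map Sum.inl := by
  ext w
  exact exists_congr fun x => and_congr_right fun _ => eq_comm

theorem lang2_eq_map (L : Language A2) : (lang2 L : Language (A1 ⊕ A2)) = L.map Sum.inr := by
  ext w
  exact exists_congr fun x => and_congr_right fun _ => eq_comm

theorem exists_rcong_cons_mem_alt (hR1 : ∀ w ∈ R1, w ≠ []) (hR2 : ∀ w ∈ R2, w ≠ [])
    (hcomb1 : ∀ w, w ≠ [] → ∃ r ∈ R1, RCong rel1 r w)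
    (hcomb2 : ∀ w, w ≠ [] → ∃ r ∈ R2, RCong rel2 r w)
    (c : A1 ⊕ A2) {v : List (A1 ⊕ A2)} (hv : v ∈ Alt (R1.map Sum.inl) (R2.map Sum.inr)) :
    ∃ v' ∈ Alt (R1.map Sum.inl) (R2.map Sum.inr), v' ≠ [] ∧
      RCong (liftL rel1 ∪ liftR rel2) v' (c :: v) := by
  rcases c with a | b
  · rw [alt_eq_one_add_mul] at hv ⊢
    exact exists_rcong_cons_mem_one_add_map_mul (fun p hp => Or.inl ⟨p, hp, rfl, rfl⟩)
      hR1 hcomb1 a hv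
  · rw [alt_comm, alt_eq_one_add_mul] at hv ⊢
    exact exists_rcong_cons_mem_one_add_map_mul (fun p hp => Or.inr ⟨p, hp, rfl, rfl⟩)
      hR2 hcomb2 b hv

theorem exists_mem_alt_rcong (hR1 : ∀ w ∈ R1, w ≠ []) (hR2 : ∀ w ∈ R2, w ≠ [])
    (hcomb1 : ∀ w, w ≠ [] → ∃ r ∈ R1, RCong rel1 r w)
    (hcomb2 : ∀ w, w ≠ [] → ∃ r ∈ R2, RCong rel2 r w) (w : List (A1 ⊕ A2)) :
    ∃ v ∈ Alt (R1.map Sum.inl) (R2.map Sum.inr), (w ≠ [] → v ≠ []) ∧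
      RCong (liftL rel1 ∪ liftR rel2) v w := by
  induction w with
  | nil => exact ⟨[], nil_mem_alt _ _, fun h => h, .refl _⟩
  | cons c w ih =>
    obtain ⟨v, hv, -, hvw⟩ := ih
    obtain ⟨v', hv', hne, hv'v⟩ := exists_rcong_cons_mem_alt hR1 hR2 hcomb1 hcomb2 c hv
    exact ⟨v', hv', fun _ => hne, .trans _ _ _ hv'v (RCong.append (.refl [c]) hvw)⟩

end FreeProduct

theorem altPlus_regular_combing_of_sgp_free_product_general
    {A1 A2 : Type*}
    (rel1 : Set (List A1 × List A1)) (rel2 : Set (List A2 × List A2))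
    (R1 : Language A1) (R2 : Language A2)
    (hR1ne : ∀ w ∈ R1, w ≠ []) (hR2ne : ∀ w ∈ R2, w ≠ [])
    (hreg1 : R1.IsRegular) (hreg2 : R2.IsRegular)
    (hcomb1 : ∀ w : List A1, w ≠ [] → ∃ r ∈ R1, RCong rel1 r w)
    (hcomb2 : ∀ w : List A2, w ≠ [] → ∃ r ∈ R2, RCong rel2 r w) :
    (Alt (lang1 R1) (lang2 R2) \ {[]} : Language (A1 ⊕ A2)).IsRegular ∧
    ∀ w : List (A1 ⊕ A2), w ≠ [] →
      ∃ v ∈ (Alt (lang1 R1) (lang2 R2) \ {[]} : Language (A1 ⊕ A2)),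
        RCong (liftL rel1 ∪ liftR rel2) v w := by
  rw [lang1_eq_map, lang2_eq_map]
  refine ⟨((hreg1.map_of_injective Sum.inl_injective).alt
    (hreg2.map_of_injective Sum.inr_injective)).sdiff Language.isRegular_one, fun w hw => ?_⟩
  obtain ⟨v, hv, hne, hvw⟩ := exists_mem_alt_rcong hR1ne hR2ne hcomb1 hcomb2 w
  exact ⟨v, ⟨hv, hne hw⟩, hvw⟩

/-- Let `S1 = Sgp⟨A1 | rel1⟩` and `S2 = Sgp⟨A2 | rel2⟩` be semigroups on disjoint
finite alphabets with regular combings `R1 ⊆ A1⁺`, `R2 ⊆ A2⁺` (every nonempty word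
is equal in the respective semigroup to some word of the combing). Then the
language `Alt⁺(R1, R2)` of nonempty alternating words is a regular combing of the
semigroup free product `S1 ∗ S2 = Sgp⟨A1 ∪ A2 | rel1 ∪ rel2⟩`: it is regular, and
every nonempty word over `A1 ∪ A2` is equal in `S1 ∗ S2` to some word of it. -/
theorem altPlus_regular_combing_of_sgp_free_product
    {A1 A2 : Type*} [Fintype A1] [Fintype A2]
    (rel1 : Set (List A1 × List A1)) (rel2 : Set (List A2 × List A2))
    (hrel1 : ∀ p ∈ rel1, p.1 ≠ [] ∧ p.2 ≠ []) (hrel2 : ∀ p ∈ rel2, p.1 ≠ [] ∧ p.2 ≠ [])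
    (R1 : Language A1) (R2 : Language A2)
    (hR1ne : ∀ w ∈ R1, w ≠ []) (hR2ne : ∀ w ∈ R2, w ≠ [])
    (hreg1 : R1.IsRegular) (hreg2 : R2.IsRegular)
    (hcomb1 : ∀ w : List A1, w ≠ [] → ∃ r ∈ R1, RCong rel1 r w)
    (hcomb2 : ∀ w : List A2, w ≠ [] → ∃ r ∈ R2, RCong rel2 r w) :
    (Alt (lang1 R1) (lang2 R2) \ {[]} : Language (A1 ⊕ A2)).IsRegular ∧
    ∀ w : List (A1 ⊕ A2), w ≠ [] →
      ∃ v ∈ (Alt (lang1 R1) (lang2 R2) \ {[]} : Language (A1 ⊕ A2)),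
        RCong (liftL rel1 ∪ liftR rel2) v w :=
  altPlus_regular_combing_of_sgp_free_product_general rel1 rel2 R1 R2 hR1ne hR2ne hreg1 hreg2 hcomb1
    hcomb2
end

section
/- If S is a word-hyperbolic semigroup with respect to a regular combing R ⊆ A^+, and for every element s ∈ S there exists t ∈ S with st = s (every element has a right stabiliser), then S is 1-extendable: the semigroup S^1 obtained by adjoining a new identity is word-hyperbolic with respect to the regular combing R ∪ {ε}. -/
/-!
Adjoining the identity adds to the multiplication table only the words `#₁#₂`, `#₁ v #₂ xʳ` with
`v = x`, and `u #₁ #₂ xʳ` with `u = x` (a product of nonempty words is never the new identity).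
Fix for each letter `a` a word `wa a ∈ R` representing a right stabiliser of `a`; it also
stabilises every word ending in `a`, so `u = x` holds exactly when `u #₁ wa(last u) #₂ xʳ` lies in
the old table. A finite transducer checks the middle block and deletes it or moves `#₁` to the
front, and context-free languages are closed under finite transductions (product of a grammar with
the transducer) and under unions.
-/

/-- Evaluation of a word over `A` in `S^1` (the semigroup `S` with a new identity
adjoined), where `f : A → S`. The empty word evaluates to the adjoined identity,
and a nonempty word to the product of its letters in `S`. -/
def evalW {A S : Type*} [Semigroup S] (f : A → S) (w : List A) : WithOne S :=
  (w.map (fun a => (f a : WithOne S))).prod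

/-- The multiplication table of a semigroup with respect to a combing `R`, with
equality interpreted in `S^1` (which agrees with equality in `S` for nonempty
words, and lets `ε` represent the adjoined identity). The alphabet is `A ⊕ Bool`,
where `Sum.inr false` plays the role of `#1` and `Sum.inr true` of `#2`. -/
def tableS {A S : Type*} [Semigroup S] (f : A → S) (R : Language A) :
    Language (A ⊕ Bool) :=
  {w | ∃ u v x : List A, u ∈ R ∧ v ∈ R ∧ x ∈ R ∧
    evalW f (u ++ v) = evalW f x ∧
    w = u.map Sum.inl ++ [Sum.inr false] ++ v.map Sum.inl ++ [Sum.inr true] ++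
      (x.map Sum.inl).reverse}

open ContextFreeGrammar Function

section ContextFree

variable {T : Type*}

@[simp]
def Symbol.map {N₁ N₂ : Type*} (φ : N₁ → N₂) : Symbol T N₁ → Symbol T N₂
  | .terminal t => .terminal t
  | .nonterminal X => .nonterminal (φ X)

lemma Symbol.map_injective {N₁ N₂ : Type*} {φ : N₁ → N₂} (hφ : Injective φ) :
    Injective (Symbol.map (T := T) φ) := by
  rintro (a | X) (b | Y) h <;> simp_all [Symbol.map, hφ.eq_iff]

@[simps]
def ContextFreeRule.map {N₁ N₂ : Type*} (φ : N₁ → N₂) (r : ContextFreeRule T N₁) :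
    ContextFreeRule T N₂ :=
  ⟨φ r.input, r.output.map (Symbol.map φ)⟩

namespace ContextFreeRule

variable {N₁ N₂ : Type*} {φ : N₁ → N₂} {r : ContextFreeRule T N₁}

lemma Rewrites.map {u v : List (Symbol T N₁)} (h : r.Rewrites u v) :
    (r.map φ).Rewrites (u.map (Symbol.map φ)) (v.map (Symbol.map φ)) := by
  obtain ⟨p, q, rfl, rfl⟩ := h.exists_parts
  simpa using
    rewrites_of_exists_parts (r.map φ) (p.map (Symbol.map φ)) (q.map (Symbol.map φ))

lemma Rewrites.of_map (hφ : Injective φ) {u : List (Symbol T N₁)} {v : List (Symbol T N₂)}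
    (h : (r.map φ).Rewrites (u.map (Symbol.map φ)) v) :
    ∃ u', r.Rewrites u u' ∧ v = u'.map (Symbol.map φ) := by
  obtain ⟨p, q, hu, rfl⟩ := h.exists_parts
  rw [List.append_assoc, List.singleton_append] at hu
  obtain ⟨p', rest, rfl, rfl, hrest⟩ := List.map_eq_append_iff.mp hu
  obtain ⟨x, q', rfl, hx, rfl⟩ := List.map_eq_cons_iff.mp hrest
  obtain rfl : x = .nonterminal r.input := Symbol.map_injective hφ hx
  exact ⟨p' ++ r.output ++ q', by simpa using rewrites_of_exists_parts r p' q', by simp⟩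

end ContextFreeRule

namespace ContextFreeGrammar

variable {g g₁ : ContextFreeGrammar T}

lemma Derives.map {φ : g₁.NT → g.NT} (hrules : ∀ r ∈ g₁.rules, r.map φ ∈ g.rules)
    {u v : List (Symbol T g₁.NT)} (h : g₁.Derives u v) :
    g.Derives (u.map (Symbol.map φ)) (v.map (Symbol.map φ)) := by
  induction h with
  | refl => rfl
  | tail _ hp ih =>
    obtain ⟨r, hr, hrw⟩ := hp
    exact ih.trans_produces ⟨r.map φ, hrules r hr, hrw.map⟩

lemma Derives.of_map {φ : g₁.NT → g.NT} (hφ : Injective φ)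
    (hrules : ∀ r ∈ g.rules, ∀ X, r.input = φ X → ∃ r₁ ∈ g₁.rules, r = r₁.map φ)
    {u : List (Symbol T g₁.NT)} {v : List (Symbol T g.NT)}
    (h : g.Derives (u.map (Symbol.map φ)) v) :
    ∃ u', g₁.Derives u u' ∧ v = u'.map (Symbol.map φ) := by
  induction h with
  | refl => exact ⟨u, Derives.refl u, rfl⟩
  | tail _ hp ih =>
    obtain ⟨u', hu', rfl⟩ := ih
    obtain ⟨r, hr, hrw⟩ := hp
    obtain ⟨y, hy, hyr⟩ := List.mem_map.mp hrw.nonterminal_input_mem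
    obtain ⟨X, rfl⟩ : ∃ X, y = .nonterminal X := by
      cases y with
      | terminal => cases hyr
      | nonterminal X => exact ⟨X, rfl⟩
    obtain ⟨r₁, hr₁, rfl⟩ := hrules r hr X (Symbol.nonterminal.inj hyr).symm
    obtain ⟨u'', hrw', rfl⟩ := hrw.of_map hφ
    exact ⟨u'', hu'.trans_produces ⟨r₁, hr₁, hrw'⟩, rfl⟩

lemma derives_map_iff {φ : g₁.NT → g.NT} (hφ : Injective φ)
    (hfwd : ∀ r ∈ g₁.rules, r.map φ ∈ g.rules)
    (hback : ∀ r ∈ g.rules, ∀ X, r.input = φ X → ∃ r₁ ∈ g₁.rules, r = r₁.map φ)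
    {u : List (Symbol T g₁.NT)} {w : List T} :
    g.Derives (u.map (Symbol.map φ)) (w.map .terminal) ↔ g₁.Derives u (w.map .terminal) := by
  have hw : (w.map .terminal).map (Symbol.map φ) = w.map .terminal := by simp [Function.comp_def]
  refine ⟨fun h => ?_, fun h => hw ▸ h.map hfwd⟩
  obtain ⟨u', hu', hwu'⟩ := h.of_map hφ hback
  rwa [List.map_injective_iff.mpr (Symbol.map_injective hφ) (hw.trans hwu')]

lemma derives_map_terminal {w : List T} {v : List (Symbol T g.NT)}
    (h : g.Derives (w.map .terminal) v) : v = w.map .terminal := by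
  refine (h.eq_or_head.resolve_right ?_).symm
  rintro ⟨_, hp, -⟩
  obtain ⟨r, -, hr⟩ := hp.exists_nonterminal_input_mem
  simp at hr

lemma Derives.eq_or_rule {X : g.NT} {v : List (Symbol T g.NT)}
    (h : g.Derives [.nonterminal X] v) :
    v = [.nonterminal X] ∨ ∃ r ∈ g.rules, r.input = X ∧ g.Derives r.output v := by
  refine h.eq_or_head.imp Eq.symm ?_
  rintro ⟨u, ⟨r, hr, hrw⟩, hu⟩
  obtain ⟨p, q, hpq, rfl⟩ := hrw.exists_parts
  obtain ⟨rfl, hX, rfl⟩ : p = [] ∧ X = r.input ∧ q = [] := by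
    rcases p with _ | ⟨_, _ | _⟩ <;> simp_all
  exact ⟨r, hr, hX.symm, by simpa using hu⟩

end ContextFreeGrammar

theorem Language.isContextFree_singleton (x : List T) : ({x} : Language T).IsContextFree := by
  classical
  refine ⟨⟨Unit, (), {⟨(), x.map .terminal⟩}⟩, Set.ext fun w => ⟨fun h => ?_, fun h => ?_⟩⟩
  · rcases Derives.eq_or_rule h with h | ⟨r, hr, -, hd⟩
    · cases w <;> simp at h
    · rw [Finset.mem_singleton.mp hr] at hd
      exact List.map_injective_iff.mpr (fun _ _ => Symbol.terminal.inj) (derives_map_terminal hd)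
  · rw [Set.mem_singleton_iff.mp h]
    exact Produces.single ⟨_, Finset.mem_singleton_self _, ContextFreeRule.Rewrites.input_output⟩

namespace ContextFreeGrammar

variable (g₁ g₂ : ContextFreeGrammar T)

open Classical in
noncomputable abbrev sum : ContextFreeGrammar T where
  NT := Option (g₁.NT ⊕ g₂.NT)
  initial := none
  rules := {⟨none, [.nonterminal (some (.inl g₁.initial))]⟩,
      ⟨none, [.nonterminal (some (.inr g₂.initial))]⟩} ∪
    g₁.rules.image (ContextFreeRule.map (some ∘ .inl)) ∪
    g₂.rules.image (ContextFreeRule.map (some ∘ .inr))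

variable {g₁ g₂}

lemma mem_sum_rules {r} : r ∈ (g₁.sum g₂).rules ↔
    ((r = ⟨none, [.nonterminal (some (.inl g₁.initial))]⟩ ∨
      r = ⟨none, [.nonterminal (some (.inr g₂.initial))]⟩) ∨
      ∃ r₁ ∈ g₁.rules, r₁.map (some ∘ .inl) = r) ∨
      ∃ r₂ ∈ g₂.rules, r₂.map (some ∘ .inr) = r := by
  simp only [sum, Finset.mem_union, Finset.mem_insert, Finset.mem_singleton, Finset.mem_image]

lemma sum_derives_inl_iff {w : List T} :
    (g₁.sum g₂).Derives [.nonterminal (some (.inl g₁.initial))] (w.map .terminal) ↔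
      w ∈ g₁.language := by
  refine derives_map_iff (u := [.nonterminal g₁.initial])
    ((Option.some_injective _).comp Sum.inl_injective)
    (fun r hr => mem_sum_rules.mpr (.inl (.inr ⟨r, hr, rfl⟩))) fun r hr X hX => ?_
  rcases mem_sum_rules.mp hr with ((rfl | rfl) | ⟨r₁, hr₁, rfl⟩) | ⟨r₂, -, rfl⟩ <;>
    first | exact ⟨r₁, hr₁, rfl⟩ | cases hX

lemma sum_derives_inr_iff {w : List T} :
    (g₁.sum g₂).Derives [.nonterminal (some (.inr g₂.initial))] (w.map .terminal) ↔
      w ∈ g₂.language := by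
  refine derives_map_iff (u := [.nonterminal g₂.initial])
    ((Option.some_injective _).comp Sum.inr_injective)
    (fun r hr => mem_sum_rules.mpr (.inr ⟨r, hr, rfl⟩)) fun r hr X hX => ?_
  rcases mem_sum_rules.mp hr with ((rfl | rfl) | ⟨r₁, -, rfl⟩) | ⟨r₂, hr₂, rfl⟩ <;>
    first | exact ⟨r₂, hr₂, rfl⟩ | cases hX

theorem language_sum : (g₁.sum g₂).language = g₁.language + g₂.language := by
  ext w
  refine ⟨fun h => ?_, fun h => ?_⟩
  · rcases Derives.eq_or_rule h with h | ⟨r, hr, hinit, hd⟩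
    · cases w <;> simp at h
    rcases mem_sum_rules.mp hr with ((rfl | rfl) | ⟨r₁, -, rfl⟩) | ⟨r₂, -, rfl⟩
    · exact .inl (sum_derives_inl_iff.mp hd)
    · exact .inr (sum_derives_inr_iff.mp hd)
    · cases hinit
    · cases hinit
  · have hstart {Y} (hY : ⟨none, [.nonterminal Y]⟩ ∈ (g₁.sum g₂).rules) :
        (g₁.sum g₂).Derives [.nonterminal none] [.nonterminal Y] :=
      Produces.single ⟨_, hY, ContextFreeRule.Rewrites.input_output⟩
    rcases h with h | h
    · exact (hstart (mem_sum_rules.mpr (.inl (.inl (.inl rfl))))).trans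
        (sum_derives_inl_iff.mpr h)
    · exact (hstart (mem_sum_rules.mpr (.inl (.inl (.inr rfl))))).trans
        (sum_derives_inr_iff.mpr h)

end ContextFreeGrammar

theorem Language.IsContextFree.add {L₁ L₂ : Language T} (h₁ : L₁.IsContextFree)
    (h₂ : L₂.IsContextFree) : (L₁ + L₂).IsContextFree := by
  obtain ⟨g₁, rfl⟩ := h₁
  obtain ⟨g₂, rfl⟩ := h₂
  exact ⟨g₁.sum g₂, language_sum⟩

end ContextFree

structure Transducer (Q I O : Type*) where
  step : Q → I → List O → Q → Prop
  start : Q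
  accept : Set Q

namespace Transducer

section Basic

variable {Q Q' I O : Type*} (M : Transducer Q I O)

def transitions : Set (Q × I × List O × Q) :=
  {t | M.step t.1 t.2.1 t.2.2.1 t.2.2.2}

inductive Run : Q → List I → List O → Q → Prop
  | nil (q : Q) : Run q [] [] q
  | cons {q p q' : Q} {c : I} {o : List O} {w : List I} {v : List O} :
      M.step q c o p → Run p w v q' → Run q (c :: w) (o ++ v) q'

def Transduces (w : List I) (v : List O) : Prop :=
  ∃ q ∈ M.accept, M.Run M.start w v q

def image (L : Language I) : Language O :=
  {v | ∃ w ∈ L, M.Transduces w v}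

variable {M}

lemma Run.append {q p q' : Q} {w₁ w₂ : List I} {v₁ v₂ : List O} (h₁ : M.Run q w₁ v₁ p)
    (h₂ : M.Run p w₂ v₂ q') : M.Run q (w₁ ++ w₂) (v₁ ++ v₂) q' := by
  induction h₁ with
  | nil => exact h₂
  | cons hs _ ih => simpa using Run.cons hs (ih h₂)

lemma Run.single {q p : Q} {c : I} {o : List O} (h : M.step q c o p) : M.Run q [c] o p := by
  simpa using Run.cons h (.nil p)

variable (M)

def comap (e : Q' → Q) (q₀ : Q') : Transducer Q' I O where
  step p c o p' := M.step (e p) c o (e p')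
  start := q₀
  accept := e ⁻¹' M.accept

variable {M}

lemma Run.of_comap {e : Q' → Q} {q₀ : Q'} {p p' : Q'} {w : List I} {v : List O}
    (h : (M.comap e q₀).Run p w v p') : M.Run (e p) w v (e p') := by
  induction h with
  | nil => exact .nil _
  | cons hs _ ih => exact .cons hs ih

lemma Run.comap {e : Q' → Q} (q₀ : Q') (he : ∀ t ∈ M.transitions, t.2.2.2 ∈ Set.range e)
    {p : Q'} {q' : Q} {w : List I} {v : List O} (h : M.Run (e p) w v q') :
    ∃ p', e p' = q' ∧ (M.comap e q₀).Run p w v p' := by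
  generalize hq : e p = q at h
  induction h generalizing p with
  | nil => exact ⟨p, hq, .nil p⟩
  | cons hs _ ih =>
    obtain ⟨r, hr⟩ := he (_, _, _, _) hs
    obtain ⟨p', hp', hrun⟩ := ih hr
    exact ⟨p', hp', .cons (show M.step (e p) _ _ (e r) by rw [hq, hr]; exact hs) hrun⟩

/-- Grammars have their nonterminals in `Type`, so the product construction below needs the
states there. Only the start state and targets of transitions occur in runs from the start. -/
theorem exists_fin_image_eq (hM : M.transitions.Finite) :
    ∃ (n : ℕ) (M' : Transducer (Fin n) I O), M'.transitions.Finite ∧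
      ∀ L, M'.image L = M.image L := by
  obtain ⟨n, e, he, hrange⟩ := ((hM.image fun t => t.2.2.2).insert M.start).fin_param
  obtain ⟨q₀, hq₀⟩ : M.start ∈ Set.range e := hrange ▸ Set.mem_insert _ _
  have htarget : ∀ t ∈ M.transitions, t.2.2.2 ∈ Set.range e :=
    fun t ht => hrange ▸ Set.mem_insert_of_mem _ ⟨t, ht, rfl⟩
  refine ⟨n, M.comap e q₀, ?_, fun L => Set.ext fun v => ⟨?_, ?_⟩⟩
  · exact hM.preimage (he.prodMap (injective_id.prodMap (injective_id.prodMap he))).injOn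
  · rintro ⟨w, hw, p, hp, hrun⟩
    exact ⟨w, hw, e p, hp, hq₀ ▸ hrun.of_comap⟩
  · rintro ⟨w, hw, q, hq, hrun⟩
    obtain ⟨p, rfl, hrun'⟩ := Run.comap q₀ htarget (hq₀ ▸ hrun)
    exact ⟨w, hw, p, hq, hrun'⟩

end Basic

section Product

variable {Q : Type} {I O : Type*} (M : Transducer Q I O) {N : Type}

/-- Runs of `M` along a sentential form. A nonterminal `X` crossed from `p` to `p'` is output as
the product-grammar nonterminal `some (p, X, p')`, which stands for the outputs of `M` from `p` to
`p'` along the words derived from `X`. -/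
inductive FormRun : Q → List (Symbol I N) → List (Symbol O (Option (Q × N × Q))) → Q → Prop
  | nil (q : Q) : FormRun q [] [] q
  | terminal {q p q' : Q} {c : I} {o : List O} {α β} :
      M.step q c o p → FormRun p α β q' → FormRun q (.terminal c :: α) (o.map .terminal ++ β) q'
  | nonterminal {q : Q} (p : Q) {q' : Q} {X : N} {α β} :
      FormRun p α β q' → FormRun q (.nonterminal X :: α) (.nonterminal (some (q, X, p)) :: β) q'

variable {M}

namespace FormRun

lemma append {q p q' : Q} {α₁ α₂ : List (Symbol I N)} {β₁ β₂}
    (h₁ : M.FormRun q α₁ β₁ p) (h₂ : M.FormRun p α₂ β₂ q') :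
    M.FormRun q (α₁ ++ α₂) (β₁ ++ β₂) q' := by
  induction h₁ with
  | nil => exact h₂
  | terminal hs _ ih => simpa using terminal hs (ih h₂)
  | nonterminal p _ ih => exact nonterminal p (ih h₂)

lemma split {q q' : Q} {α₁ α₂ : List (Symbol I N)} {β} (h : M.FormRun q (α₁ ++ α₂) β q') :
    ∃ p β₁ β₂, β = β₁ ++ β₂ ∧ M.FormRun q α₁ β₁ p ∧ M.FormRun p α₂ β₂ q' := by
  induction α₁ generalizing q β with
  | nil => exact ⟨q, [], β, rfl, nil q, h⟩
  | cons s α₁ ih =>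
    cases h with
    | terminal hs h =>
      obtain ⟨p, β₁, β₂, rfl, h₁, h₂⟩ := ih h
      exact ⟨p, _, β₂, (List.append_assoc _ _ _).symm, terminal hs h₁, h₂⟩
    | nonterminal p' h =>
      obtain ⟨p, β₁, β₂, rfl, h₁, h₂⟩ := ih h
      exact ⟨p, _, β₂, rfl, nonterminal p' h₁, h₂⟩

lemma split_nonterminal {q q' : Q} {α : List (Symbol I N)} {β₁ β₂} {Y : Option (Q × N × Q)}
    (h : M.FormRun q α (β₁ ++ .nonterminal Y :: β₂) q') :
    ∃ p X p' α₁ α₂, Y = some (p, X, p') ∧ α = α₁ ++ .nonterminal X :: α₂ ∧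
      M.FormRun q α₁ β₁ p ∧ M.FormRun p' α₂ β₂ q' := by
  generalize hβ : β₁ ++ .nonterminal Y :: β₂ = β at h
  induction h generalizing β₁ with
  | nil => simp at hβ
  | @terminal q p q' c o α β hs h ih =>
    obtain ⟨β₁', rfl, rfl⟩ : ∃ β₁', β₁ = o.map .terminal ++ β₁' ∧
        β = β₁' ++ .nonterminal Y :: β₂ := by
      rcases List.append_eq_append_iff.mp hβ with ⟨_ | ⟨s, a'⟩, ho, hβ'⟩ | ⟨β₁', rfl, rfl⟩
      · exact ⟨[], by simpa using ho.symm, by simpa using hβ'.symm⟩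
      · obtain rfl := (List.cons_eq_cons.mp hβ').1
        have : Symbol.nonterminal Y ∈ o.map .terminal := ho ▸ by simp
        simp at this
      · exact ⟨β₁', rfl, rfl⟩
    obtain ⟨p₁, X, p₂, α₁, α₂, rfl, rfl, h₁, h₂⟩ := ih rfl
    exact ⟨p₁, X, p₂, _, α₂, rfl, rfl, terminal hs h₁, h₂⟩
  | nonterminal p h ih =>
    rcases β₁ with _ | ⟨s, β₁⟩
    · simp only [List.nil_append, List.cons.injEq, Symbol.nonterminal.injEq] at hβ
      obtain ⟨rfl, rfl⟩ := hβ
      exact ⟨_, _, p, [], _, rfl, rfl, nil _, h⟩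
    · obtain ⟨rfl, rfl⟩ := List.cons_eq_cons.mp hβ
      obtain ⟨p₁, X, p₂, α₁, α₂, rfl, rfl, h₁, h₂⟩ := ih rfl
      exact ⟨p₁, X, p₂, _, α₂, rfl, rfl, nonterminal p h₁, h₂⟩

lemma exists_run {q q' : Q} {α : List (Symbol I N)} {v : List O}
    (h : M.FormRun q α (v.map .terminal) q') :
    ∃ w, α = w.map .terminal ∧ M.Run q w v q' := by
  generalize hβ : v.map Symbol.terminal = β at h
  induction h generalizing v with
  | nil => exact ⟨[], rfl, by simpa using (List.map_eq_nil_iff.mp hβ) ▸ Run.nil _⟩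
  | terminal hs _ ih =>
    obtain ⟨o', v', rfl, ho, hv⟩ := List.map_eq_append_iff.mp hβ
    obtain ⟨w, rfl, hrun⟩ := ih hv
    obtain rfl := List.map_injective_iff.mpr (fun _ _ => Symbol.terminal.inj) ho
    exact ⟨_ :: w, rfl, .cons hs hrun⟩
  | nonterminal =>
    obtain ⟨_, _, _, h, _⟩ := List.map_eq_cons_iff.mp hβ
    cases h

end FormRun

lemma Run.formRun {q q' : Q} {w : List I} {v : List O} (h : M.Run q w v q') :
    M.FormRun (N := N) q (w.map .terminal) (v.map .terminal) q' := by
  induction h with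
  | nil => exact .nil _
  | cons hs _ ih => simpa using FormRun.terminal hs ih

variable (M)

lemma finite_formRun (hM : M.transitions.Finite) [Finite Q] (α : List (Symbol I N)) :
    {x : Q × List (Symbol O (Option (Q × N × Q))) × Q | M.FormRun x.1 α x.2.1 x.2.2}.Finite := by
  induction α with
  | nil =>
    refine (Set.finite_range fun q : Q => (q, ([] : List (Symbol O _)), q)).subset ?_
    rintro ⟨q, β, q'⟩ (h : M.FormRun q [] β q')
    cases h
    exact ⟨q, rfl⟩
  | cons s α ih =>
    cases s with
    | terminal c =>
      refine ((hM.prod ih).image fun x => (x.1.1, x.1.2.2.1.map .terminal ++ x.2.2.1,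
        x.2.2.2)).subset ?_
      rintro ⟨q, β, q'⟩ (h : M.FormRun q _ β q')
      cases h with
      | @terminal _ p _ _ o α β hs h => exact ⟨((q, c, o, p), (p, β, q')), ⟨hs, h⟩, rfl⟩
    | nonterminal X =>
      refine ((Set.finite_univ.prod ih).image fun x : Q × _ =>
        (x.1, .nonterminal (some (x.1, X, x.2.1)) :: x.2.2.1, x.2.2.2)).subset ?_
      rintro ⟨q, β, q'⟩ (h : M.FormRun q _ β q')
      cases h with
      | nonterminal p h => exact ⟨(q, (p, _, q')), ⟨trivial, h⟩, rfl⟩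

def productRules (g : ContextFreeGrammar I) : Set (ContextFreeRule O (Option (Q × g.NT × Q))) :=
  {r | ∃ q ∈ M.accept, r = ⟨none, [.nonterminal (some (M.start, g.initial, q))]⟩} ∪
    {r | ∃ r₀ ∈ g.rules, ∃ q β q', M.FormRun q r₀.output β q' ∧
      r = ⟨some (q, r₀.input, q'), β⟩}

lemma finite_productRules (hM : M.transitions.Finite) [Finite Q] (g : ContextFreeGrammar I) :
    (M.productRules g).Finite := by
  refine Set.Finite.union (((Set.toFinite M.accept).image fun q =>
    (⟨none, [.nonterminal (some (M.start, g.initial, q))]⟩ : ContextFreeRule O _)).subset ?_)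
    ((g.rules.finite_toSet.biUnion fun r₀ _ => (M.finite_formRun hM r₀.output).image
      fun x => (⟨some (x.1, r₀.input, x.2.2), x.2.1⟩ : ContextFreeRule O _)).subset ?_)
  · rintro r ⟨q, hq, rfl⟩
    exact ⟨q, hq, rfl⟩
  · rintro r ⟨r₀, hr₀, q, β, q', h, rfl⟩
    exact Set.mem_biUnion (x := r₀) hr₀ ⟨(q, β, q'), h, rfl⟩

noncomputable abbrev productGrammar (hM : M.transitions.Finite) [Finite Q]
    (g : ContextFreeGrammar I) : ContextFreeGrammar O where
  NT := Option (Q × g.NT × Q)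
  initial := none
  rules := (M.finite_productRules hM g).toFinset

variable {M} {hM : M.transitions.Finite} [Finite Q] {g : ContextFreeGrammar I}

lemma mem_productGrammar_rules {r} : r ∈ (M.productGrammar hM g).rules ↔ r ∈ M.productRules g :=
  Set.Finite.mem_toFinset _

lemma FormRun.produces {q q' : Q} {α : List (Symbol I g.NT)} {β β'}
    (h : (M.productGrammar hM g).Produces β β') (hβ : M.FormRun q α β q') :
    ∃ α', g.Produces α α' ∧ M.FormRun q α' β' q' := by
  obtain ⟨r, hr, hrw⟩ := h
  obtain ⟨β₁, β₂, rfl, rfl⟩ := hrw.exists_parts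
  rw [List.append_assoc, List.singleton_append] at hβ
  obtain ⟨p, X, p', α₁, α₂, hin, rfl, h₁, h₂⟩ := hβ.split_nonterminal
  rcases mem_productGrammar_rules.mp hr with ⟨_, -, rfl⟩ | ⟨r₀, hr₀, s, γ, s', hγ, rfl⟩
  · cases hin
  · obtain ⟨rfl, rfl, rfl⟩ : s = p ∧ r₀.input = X ∧ s' = p' := by simpa using hin
    refine ⟨α₁ ++ r₀.output ++ α₂, ⟨r₀, hr₀, ?_⟩, ?_⟩
    · simpa using ContextFreeRule.rewrites_of_exists_parts r₀ α₁ α₂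
    · simpa using h₁.append (hγ.append h₂)

lemma FormRun.derives {q q' : Q} {α : List (Symbol I g.NT)} {β β'}
    (h : (M.productGrammar hM g).Derives β β') (hβ : M.FormRun q α β q') :
    ∃ α', g.Derives α α' ∧ M.FormRun q α' β' q' := by
  induction h with
  | refl => exact ⟨α, Derives.refl α, hβ⟩
  | tail _ hp ih =>
    obtain ⟨α', hα', h'⟩ := ih
    obtain ⟨α'', hα'', h''⟩ := h'.produces hp
    exact ⟨α'', hα'.trans_produces hα'', h''⟩

lemma exists_formRun_of_derives {q q' : Q} {α : List (Symbol I g.NT)} {w : List I} {v : List O}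
    (h : g.Derives α (w.map .terminal)) (hrun : M.Run q w v q') :
    ∃ β, M.FormRun q α β q' ∧ (M.productGrammar hM g).Derives β (v.map .terminal) := by
  induction h using Relation.ReflTransGen.head_induction_on generalizing q q' with
  | refl => exact ⟨_, hrun.formRun, Derives.refl _⟩
  | head hp _ ih =>
    obtain ⟨β', hβ', hd⟩ := ih hrun
    obtain ⟨r₀, hr₀, hrw⟩ := hp
    obtain ⟨α₁, α₂, rfl, rfl⟩ := hrw.exists_parts
    obtain ⟨p, β₁, β₂₃, rfl, h₁, h₂₃⟩ := (by simpa using hβ' :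
      M.FormRun q (α₁ ++ (r₀.output ++ α₂)) β' q').split
    obtain ⟨p', γ, β₃, rfl, hγ, h₃⟩ := h₂₃.split
    refine ⟨β₁ ++ .nonterminal (some (p, r₀.input, p')) :: β₃, ?_, .head ?_ hd⟩
    · simpa using h₁.append (.nonterminal p' h₃)
    · refine ⟨_, mem_productGrammar_rules.mpr (.inr ⟨r₀, hr₀, p, γ, p', hγ, rfl⟩), ?_⟩
      simpa using ContextFreeRule.rewrites_of_exists_parts
        (⟨some (p, r₀.input, p'), γ⟩ : ContextFreeRule O (M.productGrammar hM g).NT) β₁ β₃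

theorem productGrammar_language : (M.productGrammar hM g).language = M.image g.language := by
  ext v
  refine ⟨fun h => ?_, fun ⟨w, hw, q, hq, hrun⟩ => ?_⟩
  · rcases Derives.eq_or_rule h with h | ⟨r, hr, hinit, hd⟩
    · cases v <;> simp at h
    rcases mem_productGrammar_rules.mp hr with ⟨q, hq, rfl⟩ | ⟨_, -, _, _, _, -, rfl⟩
    · obtain ⟨α, hα, hα'⟩ := FormRun.derives hd (.nonterminal q (.nil q))
      obtain ⟨w, rfl, hrun⟩ := hα'.exists_run
      exact ⟨w, hα, q, hq, hrun⟩
    · cases hinit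
  · obtain ⟨β, hβ, hd⟩ := exists_formRun_of_derives (hM := hM) hw hrun
    cases hβ with | nonterminal p h =>
    cases h
    refine .head ⟨_, mem_productGrammar_rules.mpr (.inl ⟨q, hq, rfl⟩), ?_⟩ hd
    exact ContextFreeRule.Rewrites.input_output

end Product

theorem isContextFree_image {Q I O : Type*} (M : Transducer Q I O)
    (hM : M.transitions.Finite) {L : Language I} (hL : L.IsContextFree) :
    (M.image L).IsContextFree := by
  obtain ⟨n, M', hM', hM'L⟩ := M.exists_fin_image_eq hM
  obtain ⟨g, rfl⟩ := hL
  exact ⟨M'.productGrammar hM' g, by rw [Transducer.productGrammar_language, hM'L]⟩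

end Transducer

namespace StabiliserCheck

inductive State (A : Type*)
  | init
  | copy (last : A)
  | check (last : A) (rest : List A)
  | tail

open State

variable {A : Type*}

/-- Reading `u #₁ v #₂ y`, check that `v` is the word `wa a` attached to the last letter `a`
of `u`, and output `pre ++ u ++ mid ++ #₂ ++ y`. The suffix condition in `check` only serves to
make the set of transitions finite. -/
inductive Step (wa : A → List A) (pre mid : List (A ⊕ Bool)) :
    State A → A ⊕ Bool → List (A ⊕ Bool) → State A → Prop
  | first (c : A) : Step wa pre mid init (.inl c) (pre ++ [.inl c]) (copy c)
  | copy (a c : A) : Step wa pre mid (copy a) (.inl c) [.inl c] (copy c)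
  | sep₁ (a : A) : Step wa pre mid (copy a) (.inr false) mid (check a (wa a))
  | check (a c : A) (s : List A) (h : c :: s <:+ wa a) :
      Step wa pre mid (check a (c :: s)) (.inl c) [] (check a s)
  | sep₂ (a : A) : Step wa pre mid (check a []) (.inr true) [.inr true] tail
  | tail (c : A) : Step wa pre mid tail (.inl c) [.inl c] tail

end StabiliserCheck

open StabiliserCheck StabiliserCheck.State in
def stabiliserCheck {A : Type*} (wa : A → List A) (pre mid : List (A ⊕ Bool)) :
    Transducer (State A) (A ⊕ Bool) (A ⊕ Bool) where
  step := Step wa pre mid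
  start := init
  accept := {tail}

namespace StabiliserCheck

open State Transducer

variable {A : Type*} {wa : A → List A} {pre mid : List (A ⊕ Bool)}

local notation "𝓣" => stabiliserCheck wa pre mid

lemma finite_transitions [Finite A] : (𝓣).transitions.Finite := by
  let P : Set (State A) := {init, tail} ∪ Set.range copy ∪
    ⋃ a, check a '' {s | s <:+ wa a}
  have hP : P.Finite := by
    refine ((Set.toFinite _).union (Set.finite_range _)).union (Set.finite_iUnion fun a => ?_)
    exact ((List.finite_toSet (wa a).tails).subset fun s hs => by simpa using hs).image _
  refine (hP.prod (Set.finite_univ.prod ((List.finite_length_le _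
    (pre.length + mid.length + 1)).prod hP))).subset ?_
  rintro ⟨q, c, o, q'⟩ (h : Step wa pre mid q c o q')
  have hcheck (a : A) (s : List A) (hs : s <:+ wa a) : check a s ∈ P :=
    Or.inr (Set.mem_iUnion.mpr ⟨a, s, hs, rfl⟩)
  cases h with
  | first c => exact ⟨by simp [P], trivial, by simp, by simp [P]⟩
  | copy a c => exact ⟨by simp [P], trivial, by simp, by simp [P]⟩
  | sep₁ a => exact ⟨by simp [P], trivial, by simp; omega, hcheck a _ (List.suffix_refl _)⟩
  | check a c s h =>
    exact ⟨hcheck a _ h, trivial, by simp, hcheck a s ((List.suffix_cons c s).trans h)⟩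
  | sep₂ a => exact ⟨hcheck a [] List.nil_suffix, trivial, by simp, by simp [P]⟩
  | tail c => exact ⟨by simp [P], trivial, by simp, by simp [P]⟩

lemma run_tail {y : List A} {out : List (A ⊕ Bool)} {q : State A}
    (h : Run 𝓣 tail (y.map .inl) out q) : out = y.map .inl ∧ q = tail := by
  induction y generalizing out with
  | nil => cases h; exact ⟨rfl, rfl⟩
  | cons c y ih =>
    obtain _ | ⟨(_ | _ | _ | _ | _ | _), h⟩ := h
    obtain ⟨rfl, rfl⟩ := ih h
    exact ⟨rfl, rfl⟩

lemma run_check {a : A} {s v : List A} {rest out : List (A ⊕ Bool)} {q : State A}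
    (h : Run 𝓣 (check a s) (v.map .inl ++ .inr true :: rest) out q) :
    v = s ∧ ∃ out', out = .inr true :: out' ∧ Run 𝓣 tail rest out' q := by
  induction v generalizing s out with
  | nil =>
    obtain _ | ⟨(_ | _ | _ | _ | _ | _), h⟩ := h
    exact ⟨rfl, _, rfl, h⟩
  | cons c v ih =>
    obtain _ | ⟨(_ | _ | _ | _ | _ | _), h⟩ := h
    obtain ⟨rfl, hrest⟩ := ih h
    simpa using hrest

lemma run_copy {a : A} {u : List A} {rest out : List (A ⊕ Bool)} {q : State A}
    (h : Run 𝓣 (copy a) (u.map .inl ++ .inr false :: rest) out q) :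
    ∃ out', out = u.map .inl ++ mid ++ out' ∧
      Run 𝓣 (check ((a :: u).getLast (List.cons_ne_nil _ _))
        (wa ((a :: u).getLast (List.cons_ne_nil _ _)))) rest out' q := by
  induction u generalizing a out with
  | nil =>
    obtain _ | ⟨(_ | _ | _ | _ | _ | _), h⟩ := h
    exact ⟨_, rfl, h⟩
  | cons c u ih =>
    obtain _ | ⟨(_ | _ | _ | _ | _ | _), h⟩ := h
    obtain ⟨out', rfl, hrest⟩ := ih h
    exact ⟨out', by simp, hrest⟩

lemma run_init {u : List A} {rest out : List (A ⊕ Bool)} {q : State A}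
    (h : Run 𝓣 init (u.map .inl ++ .inr false :: rest) out q) :
    ∃ hu : u ≠ [], ∃ out', out = pre ++ u.map .inl ++ mid ++ out' ∧
      Run 𝓣 (check (u.getLast hu) (wa (u.getLast hu))) rest out' q := by
  rcases u with _ | ⟨c, u⟩
  · obtain _ | ⟨(_ | _ | _ | _ | _ | _), h⟩ := h
  · obtain _ | ⟨(_ | _ | _ | _ | _ | _), h⟩ := h
    obtain ⟨out', rfl, hrest⟩ := run_copy h
    exact ⟨List.cons_ne_nil _ _, out', by simp, hrest⟩

lemma run_tail_self (y : List A) : Run 𝓣 tail (y.map .inl) (y.map .inl) tail := by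
  induction y with
  | nil => exact .nil _
  | cons c y ih => exact .cons (Step.tail c) ih

lemma run_check_self {a : A} {s : List A} (hs : s <:+ wa a) :
    Run 𝓣 (check a s) (s.map .inl) [] (check a []) := by
  induction s with
  | nil => exact .nil _
  | cons c s ih => exact .cons (Step.check a c s hs) (ih ((List.suffix_cons c s).trans hs))

lemma run_copy_self (a : A) (u : List A) :
    Run 𝓣 (copy a) (u.map .inl) (u.map .inl) (copy ((a :: u).getLast (List.cons_ne_nil _ _))) := by
  induction u generalizing a with
  | nil => exact .nil _
  | cons c u ih => exact .cons (Step.copy a c) (ih c)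

theorem transduces_iff {u v y : List A} {out : List (A ⊕ Bool)} :
    Transduces 𝓣 (u.map .inl ++ [.inr false] ++ v.map .inl ++ [.inr true] ++ y.map .inl) out ↔
      ∃ hu : u ≠ [], v = wa (u.getLast hu) ∧
        out = pre ++ u.map .inl ++ mid ++ [.inr true] ++ y.map .inl := by
  constructor
  · rintro ⟨q, rfl, h⟩
    simp only [List.append_assoc, List.singleton_append] at h
    obtain ⟨hu, out', rfl, hcheck⟩ := run_init (wa := wa) (pre := pre) (mid := mid) h
    obtain ⟨rfl, out'', rfl, htail⟩ := run_check hcheck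
    obtain ⟨rfl, -⟩ := run_tail htail
    exact ⟨hu, rfl, by simp⟩
  · rintro ⟨hu, rfl, rfl⟩
    obtain ⟨c, u, rfl⟩ := List.exists_cons_of_ne_nil hu
    refine ⟨tail, rfl, show Run 𝓣 init _ _ _ from ?_⟩
    have := (Run.cons (M := 𝓣) (Step.first c) (run_copy_self c u)).append
      ((Run.single (Step.sep₁ _)).append ((run_check_self (List.suffix_refl _)).append
        ((Run.single (Step.sep₂ _)).append (run_tail_self y))))
    simpa using this

end StabiliserCheck

theorem Language.isRegular_singleton_nil {α : Type*} : ({[]} : Language α).IsRegular := by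
  rw [isRegular_iff_finite_range_leftQuotient]
  refine (Set.toFinite ({{[]}, 0} : Set (Language α))).subset ?_
  rintro _ ⟨_ | ⟨a, x⟩, rfl⟩
  · exact Or.inl (leftQuotient_nil _)
  · exact Or.inr (Set.eq_empty_of_forall_notMem fun y hy => by cases hy)

section Semigroup

variable {A S : Type*} [Semigroup S] {f : A → S}

lemma evalW_append (f : A → S) (u v : List A) : evalW f (u ++ v) = evalW f u * evalW f v := by
  simp [evalW]

lemma evalW_eq_one_iff {w : List A} : evalW f w = 1 ↔ w = [] := by
  refine ⟨fun h => ?_, fun h => h ▸ rfl⟩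
  induction w with
  | nil => rfl
  | cons a w ih =>
    have h' : (f a : WithOne S) * evalW f w = 1 := by simpa [evalW] using h
    generalize evalW f w = x at h'
    cases x with
    | one => simp at h'
    | coe t => simp [← WithOne.coe_mul] at h'

lemma evalW_append_of_getLast {u : List A} (hu : u ≠ []) {t : List A}
    (ht : evalW f (u.getLast hu :: t) = evalW f [u.getLast hu]) :
    evalW f (u ++ t) = evalW f u := by
  have hsplit := List.dropLast_append_getLast hu
  calc evalW f (u ++ t) = evalW f (u.dropLast ++ (u.getLast hu :: t)) := by
        rw [← List.singleton_append, ← List.append_assoc, hsplit]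
    _ = evalW f u := by rw [evalW_append, ht, ← evalW_append, hsplit]

def equalityTable (f : A → S) (R : Language A) (pre mid : List (A ⊕ Bool)) :
    Language (A ⊕ Bool) :=
  {w | ∃ u x, u ∈ R ∧ x ∈ R ∧ evalW f u = evalW f x ∧
    w = pre ++ u.map .inl ++ mid ++ [.inr true] ++ (x.map .inl).reverse}

theorem image_stabiliserCheck_tableS {R : Language A} (hR : ∀ w ∈ R, w ≠ []) {wa : A → List A}
    (hwa : ∀ a, wa a ∈ R ∧ evalW f (a :: wa a) = evalW f [a]) (pre mid : List (A ⊕ Bool)) :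
    (stabiliserCheck wa pre mid).image (tableS f R) = equalityTable f R pre mid := by
  ext w
  constructor
  · rintro ⟨_, ⟨u, v, x, hu, -, hx, he, rfl⟩, hacc⟩
    rw [← List.map_reverse, StabiliserCheck.transduces_iff] at hacc
    obtain ⟨hu', rfl, rfl⟩ := hacc
    exact ⟨u, x, hu, hx, (evalW_append_of_getLast hu' (hwa _).2).symm.trans he, by simp⟩
  · rintro ⟨u, x, hu, hx, he, rfl⟩
    refine ⟨_, ⟨u, wa (u.getLast (hR u hu)), x, hu, (hwa _).1, hx,
      (evalW_append_of_getLast _ (hwa _).2).trans he, rfl⟩, ?_⟩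
    rw [← List.map_reverse, StabiliserCheck.transduces_iff]
    exact ⟨hR u hu, rfl, by simp⟩

theorem tableS_add_one {R : Language A} (hR : ∀ w ∈ R, w ≠ []) :
    tableS f (R + {[]}) = tableS f R + {[.inr false, .inr true]} +
      equalityTable f R [.inr false] [] + equalityTable f R [] [.inr false] := by
  ext w
  simp only [Language.mem_add]
  constructor
  · rintro ⟨u, v, x, hu, hv, hx, he, rfl⟩
    have hxR (huv : u ++ v ≠ []) : x ∈ R := hx.resolve_right fun hx₀ =>
      huv (evalW_eq_one_iff.mp (he.trans (evalW_eq_one_iff.mpr hx₀)))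
    rcases hu with hu | rfl <;> rcases hv with hv | rfl
    · exact .inl (.inl (.inl ⟨u, v, x, hu, hv, hxR (by simp [hR u hu]), he, rfl⟩))
    · exact .inr ⟨u, x, hu, hxR (by simp [hR u hu]), by simpa using he, by simp⟩
    · exact .inl (.inr ⟨v, x, hv, hxR (by simp [hR v hv]), by simpa using he, by simp⟩)
    · obtain rfl : x = [] := evalW_eq_one_iff.mp he.symm
      exact .inl (.inl (.inr rfl))
  · rintro (((⟨u, v, x, hu, hv, hx, he, rfl⟩ | rfl) | ⟨u, x, hu, hx, he, rfl⟩) |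
      ⟨u, x, hu, hx, he, rfl⟩)
    · exact ⟨u, v, x, .inl hu, .inl hv, .inl hx, he, rfl⟩
    · exact ⟨[], [], [], .inr rfl, .inr rfl, .inr rfl, rfl, rfl⟩
    · exact ⟨[], u, x, .inr rfl, .inl hu, .inl hx, by simpa using he, by simp⟩
    · exact ⟨u, [], x, .inl hu, .inr rfl, .inl hx, by simpa using he, by simp⟩

end Semigroup

theorem right_stabiliser_one_extendable_general {A S : Type*} [Fintype A] [Semigroup S]
    (f : A → S)
    (R : Language A) (hRne : ∀ w ∈ R, w ≠ [])
    (hreg : R.IsRegular)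
    (hcomb : ∀ s : S, ∃ w ∈ R, evalW f w = ↑s)
    (htab : (tableS f R).IsContextFree)
    (hstab : ∀ s : S, ∃ t : S, s * t = s) :
    (R + {[]} : Language A).IsRegular ∧
    (∀ x : WithOne S, ∃ w ∈ (R + {[]} : Language A), evalW f w = x) ∧
    (tableS f (R + {[]})).IsContextFree := by
  refine ⟨hreg.add Language.isRegular_singleton_nil, fun x => ?_, ?_⟩
  · cases x with
    | one => exact ⟨[], .inr rfl, rfl⟩
    | coe s =>
      obtain ⟨w, hw, hws⟩ := hcomb s
      exact ⟨w, .inl hw, hws⟩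
  have hletter (a : A) : ∃ w, w ∈ R ∧ evalW f (a :: w) = evalW f [a] := by
    obtain ⟨t, ht⟩ := hstab (f a)
    obtain ⟨w, hw, hwt⟩ := hcomb t
    refine ⟨w, hw, ?_⟩
    rw [← List.singleton_append, evalW_append, hwt]
    simp [evalW, ← WithOne.coe_mul, ht]
  choose wa hwa using hletter
  have himage (pre mid : List (A ⊕ Bool)) : (equalityTable f R pre mid).IsContextFree :=
    image_stabiliserCheck_tableS hRne hwa pre mid ▸
      (stabiliserCheck wa pre mid).isContextFree_image StabiliserCheck.finite_transitions htab
  rw [tableS_add_one hRne]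
  exact ((htab.add (Language.isContextFree_singleton _)).add (himage _ _)).add (himage _ _)

/-- If `S` is a word-hyperbolic semigroup with respect to a regular combing
`R ⊆ A⁺`, and every element of `S` has a right stabiliser, then `S` is
`1`-extendable: `S^1` is word-hyperbolic with respect to the regular combing
`R ∪ {ε}`. -/
theorem right_stabiliser_one_extendable {A S : Type*} [Fintype A] [Semigroup S]
    (f : A → S)
    (hgen : ∀ s : S, ∃ w : List A, w ≠ [] ∧ evalW f w = ↑s)
    (R : Language A) (hRne : ∀ w ∈ R, w ≠ [])
    (hreg : R.IsRegular)
    (hcomb : ∀ s : S, ∃ w ∈ R, evalW f w = ↑s)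
    (htab : (tableS f R).IsContextFree)
    (hstab : ∀ s : S, ∃ t : S, s * t = s) :
    (R + {[]} : Language A).IsRegular ∧
    (∀ x : WithOne S, ∃ w ∈ (R + {[]} : Language A), evalW f w = x) ∧
    (tableS f (R + {[]})).IsContextFree :=
  right_stabiliser_one_extendable_general f R hRne hreg hcomb htab hstab
end
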